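/- arXiv:2202.09404 — 2 statements merged into one kernel-verified Lean document; each statement's English description precedes it below -/
import Mathlib

section
/- For all real numbers x, y ≥ 0 and every real p ≥ 3, one has (x+y)^p - x^p - y^p - p·x^{p-1}·y - p·x·y^{p-1} ≥ 0. -/
/-!
Subtract from `(x + y) ^ r` successively more terms of its binomial expansion: first
`y ^ r + r x y ^ (r - 1)`, then also `x ^ r`, then also `r x ^ (r - 1) y`. Each difference vanishes
when one variable is `0`, and its derivative in that variable is `r` times the previous difference
at exponent `r - 1`. So each difference is nonnegative once the previous one is, starting from the
monotonicity of `s ↦ s ^ (r - 1)`; every step costs one unit of the exponent, whence `p ≥ 3`.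
-/

open Real Set

lemma nonneg_of_hasDerivAt_of_nonneg {f f' : ℝ → ℝ} (hf : ∀ t, HasDerivAt f (f' t) t)
    (hf₀ : f 0 = 0) (hf' : ∀ t, 0 < t → 0 ≤ f' t) {y : ℝ} (hy : 0 ≤ y) : 0 ≤ f y := by
  have hmono : MonotoneOn f (Ici 0) := by
    refine monotoneOn_of_hasDerivWithinAt_nonneg (convex_Ici 0)
      (fun t _ ↦ (hf t).continuousAt.continuousWithinAt) (fun t _ ↦ (hf t).hasDerivWithinAt) ?_
    rw [interior_Ici]
    exact hf'
  simpa [hf₀] using hmono self_mem_Ici hy hy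

lemma hasDerivAt_const_add_rpow (x r t : ℝ) (hr : 1 ≤ r) :
    HasDerivAt (fun t ↦ (x + t) ^ r) (r * (x + t) ^ (r - 1)) t := by
  simpa using ((hasDerivAt_id t).const_add x).rpow_const (Or.inr hr)

lemma rpow_add_mul_mul_rpow_sub_one_le {r : ℝ} (hr : 1 ≤ r) {x y : ℝ} (hx : 0 ≤ x) (hy : 0 ≤ y) :
    y ^ r + r * x * y ^ (r - 1) ≤ (x + y) ^ r := by
  have hderiv (s : ℝ) : HasDerivAt (fun s ↦ (y + s) ^ r - y ^ r - r * s * y ^ (r - 1))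
      (r * (y + s) ^ (r - 1) - r * 1 * y ^ (r - 1)) s :=
    ((hasDerivAt_const_add_rpow y r s hr).sub_const (y ^ r)).sub
      (((hasDerivAt_id s).const_mul r).mul_const (y ^ (r - 1)))
  have := nonneg_of_hasDerivAt_of_nonneg hderiv (by simp) (fun s hs ↦ ?_) hx
  · rw [add_comm x y]; linarith
  have : y ^ (r - 1) ≤ (y + s) ^ (r - 1) := by gcongr; linarith
  nlinarith

lemma rpow_add_rpow_add_mul_mul_rpow_sub_one_le {q : ℝ} (hq : 2 ≤ q) {x y : ℝ} (hx : 0 ≤ x)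
    (hy : 0 ≤ y) : x ^ q + y ^ q + q * x * y ^ (q - 1) ≤ (x + y) ^ q := by
  have hderiv (t : ℝ) : HasDerivAt (fun t ↦ (x + t) ^ q - x ^ q - t ^ q - q * x * t ^ (q - 1))
      (q * (x + t) ^ (q - 1) - q * t ^ (q - 1) - q * x * ((q - 1) * t ^ (q - 1 - 1))) t :=
    (((hasDerivAt_const_add_rpow x q t (by linarith)).sub_const (x ^ q)).sub
      (hasDerivAt_rpow_const (Or.inr (by linarith)))).sub
      ((hasDerivAt_rpow_const (Or.inr (by linarith))).const_mul (q * x))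
  have h₀ : (0 : ℝ) ^ q = 0 ∧ (0 : ℝ) ^ (q - 1) = 0 :=
    ⟨zero_rpow (by linarith), zero_rpow (by linarith)⟩
  have := nonneg_of_hasDerivAt_of_nonneg hderiv (by simp [h₀]) (fun t ht ↦ ?_) hy
  · linarith
  have := rpow_add_mul_mul_rpow_sub_one_le (r := q - 1) (by linarith) hx ht.le
  nlinarith

theorem stmt_0 (x y p : ℝ) (hx : 0 ≤ x) (hy : 0 ≤ y) (hp : 3 ≤ p) :
    (x + y) ^ p - x ^ p - y ^ p - p * x ^ (p - 1) * y - p * x * y ^ (p - 1) ≥ 0 := by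
  have hderiv (t : ℝ) : HasDerivAt
      (fun t ↦ (x + t) ^ p - x ^ p - t ^ p - p * x ^ (p - 1) * t - p * x * t ^ (p - 1))
      (p * (x + t) ^ (p - 1) - p * t ^ (p - 1) - p * x ^ (p - 1) * 1
        - p * x * ((p - 1) * t ^ (p - 1 - 1))) t :=
    ((((hasDerivAt_const_add_rpow x p t (by linarith)).sub_const (x ^ p)).sub
      (hasDerivAt_rpow_const (Or.inr (by linarith)))).sub
      ((hasDerivAt_id t).const_mul (p * x ^ (p - 1)))).sub
      ((hasDerivAt_rpow_const (Or.inr (by linarith))).const_mul (p * x))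
  have h₀ : (0 : ℝ) ^ p = 0 ∧ (0 : ℝ) ^ (p - 1) = 0 :=
    ⟨zero_rpow (by linarith), zero_rpow (by linarith)⟩
  refine nonneg_of_hasDerivAt_of_nonneg hderiv (by simp [h₀]) (fun t ht ↦ ?_) hy
  have := rpow_add_rpow_add_mul_mul_rpow_sub_one_le (q := p - 1) (by linarith) hx ht.le
  nlinarith
end

section
/- For every real p with 2 < p ≤ 3 there exists a constant C = C(p) > 0 such that for all real x, y: | |x+y|^p - |x|^p - |y|^p - p·x·y·(|x|^{p-2} + |y|^{p-2}) | ≤ C·|x|^{p-1}·|y| if |x| ≤ |y|, and ≤ C·|x|·|y|^{p-1} if |x| ≥ |y|. -/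
/-!
For `|x| ≤ |y|`, split the remainder as the first-order Taylor remainder of `|·|^p` at `y` in
direction `x`, minus `|x|^p` and `p x y |x|^(p-2)`; the last two are at most `p |x|^(p-1) |y|`.
Since `t ↦ t |t|^(p-2)` has derivative `(p-1) |t|^(p-2)`, the mean value theorem (applied twice)
bounds the Taylor remainder by `p (p-1) (2|y|)^(p-2) x²`, and `|y|^(p-2) x² ≤ |x|^(p-1) |y|`
because `p - 2 ≤ 1`. The case `|y| ≤ |x|` follows by symmetry.
-/

open Real

lemma hasDerivAt_mul_abs_rpow {q : ℝ} (hq : 0 < q) (t : ℝ) :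
    HasDerivAt (fun s : ℝ => s * |s| ^ q) ((q + 1) * |t| ^ q) t := by
  rcases eq_or_ne t 0 with rfl | ht
  · rw [hasDerivAt_iff_tendsto_slope]
    have hcont : ContinuousAt (fun s : ℝ => |s| ^ q) 0 := by fun_prop (discharger := simp [hq.le])
    have := hcont.tendsto.mono_left (nhdsWithin_le_nhds (s := {0}ᶜ))
    refine (this.congr' ?_).trans_eq (by simp [zero_rpow hq.ne'])
    filter_upwards [self_mem_nhdsWithin] with s hs
    simp [slope_def_field, mul_div_cancel_left₀ _ (show s ≠ 0 from hs)]
  · -- away from `0`, `s * |s| ^ q = |s| ^ (q + 2) / s` and `|·| ^ (q + 2)` is differentiable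
    have hquot := (hasDerivAt_abs_rpow t (show 1 < q + 2 by linarith)).div (hasDerivAt_id t) ht
    have hpow : ∀ s : ℝ, |s| ^ (q + 2) = |s| ^ q * s ^ 2 := fun s => by
      rw [rpow_add' (abs_nonneg s) (by linarith), ← sq_abs s]; norm_cast
    refine (hquot.congr_deriv ?_).congr_of_eventuallyEq ?_
    · simp only [id, hpow, add_sub_cancel_right]; field_simp; ring
    · filter_upwards [eventually_ne_nhds ht] with s hs
      simp only [Pi.div_apply, id, hpow]; field_simp

lemma abs_mul_abs_rpow_sub_le {q R a b : ℝ} (hq : 0 < q) (ha : |a| ≤ R) (hb : |b| ≤ R) :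
    |a * |a| ^ q - b * |b| ^ q| ≤ (q + 1) * R ^ q * |a - b| := by
  refine (convex_closedBall (0 : ℝ) R).norm_image_sub_le_of_norm_hasDerivWithin_le
    (fun t _ => (hasDerivAt_mul_abs_rpow hq t).hasDerivWithinAt) (fun t ht => ?_)
    (mem_closedBall_zero_iff.2 hb) (mem_closedBall_zero_iff.2 ha)
  rw [mem_closedBall_zero_iff, norm_eq_abs] at ht
  rw [norm_mul, norm_of_nonneg (by positivity : 0 ≤ q + 1), norm_of_nonneg (by positivity)]
  gcongr

lemma abs_add_rpow_taylor_le {p : ℝ} (hp : 2 < p) (x y : ℝ) :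
    |(|y + x| ^ p - |y| ^ p - p * |y| ^ (p - 2) * y * x)|
      ≤ p * (p - 1) * (|x| + |y|) ^ (p - 2) * x ^ 2 := by
  set g : ℝ → ℝ := fun s => |y + s| ^ p - p * |y| ^ (p - 2) * y * s
  have hderiv (s : ℝ) : HasDerivAt g
      (p * ((y + s) * |y + s| ^ (p - 2) - y * |y| ^ (p - 2))) s := by
    refine (((hasDerivAt_abs_rpow (y + s) (by linarith : 1 < p)).comp s
      ((hasDerivAt_id s).const_add y)).sub
        ((hasDerivAt_id s).const_mul (p * |y| ^ (p - 2) * y))).congr_deriv ?_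
    ring
  have hbound : ∀ s ∈ Metric.closedBall (0 : ℝ) |x|,
      ‖p * ((y + s) * |y + s| ^ (p - 2) - y * |y| ^ (p - 2))‖
        ≤ p * (p - 1) * (|x| + |y|) ^ (p - 2) * |x| := by
    intro s hs
    rw [mem_closedBall_zero_iff, norm_eq_abs] at hs
    have hys : |y + s| ≤ |x| + |y| := (abs_add_le y s).trans (by linarith)
    have hlip := abs_mul_abs_rpow_sub_le (by linarith : 0 < p - 2) hys (by linarith [abs_nonneg x])
    rw [add_sub_cancel_left, show p - 2 + 1 = p - 1 by ring] at hlip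
    rw [norm_mul, norm_eq_abs, norm_eq_abs, abs_of_pos (by linarith : 0 < p)]
    calc p * |(y + s) * |y + s| ^ (p - 2) - y * |y| ^ (p - 2)|
        ≤ p * ((p - 1) * (|x| + |y|) ^ (p - 2) * |x|) := by
          gcongr
          exact hlip.trans (by gcongr; exact mul_nonneg (by linarith) (by positivity))
      _ = _ := by ring
  have hmvt := (convex_closedBall (0 : ℝ) |x|).norm_image_sub_le_of_norm_hasDerivWithin_le
    (fun s _ => (hderiv s).hasDerivWithinAt) hbound (x := 0) (y := x) (by simp) (by simp)
  simp only [g, add_zero, mul_zero, sub_zero, norm_eq_abs] at hmvt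
  calc _ = |(|y + x| ^ p - p * |y| ^ (p - 2) * y * x - |y| ^ p)| := by ring_nf
    _ ≤ _ := hmvt
    _ = _ := by rw [mul_assoc _ |x|, ← sq, sq_abs]

lemma rpow_mul_le_rpow_mul_of_le {a b r : ℝ} (ha : 0 ≤ a) (hab : a ≤ b) (hr : r ≤ 1) :
    b ^ r * a ≤ a ^ r * b := by
  rcases ha.eq_or_lt with rfl | ha
  · simpa using mul_nonneg (rpow_nonneg le_rfl r) hab
  have hb := ha.trans_le hab
  calc b ^ r * a = b ^ (r - 1) * (b * a) := by
        rw [← mul_assoc, ← rpow_add_one hb.ne', sub_add_cancel]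
    _ ≤ a ^ (r - 1) * (b * a) :=
        mul_le_mul_of_nonneg_right (rpow_le_rpow_of_nonpos ha hab (by linarith)) (by positivity)
    _ = a ^ r * b := by rw [mul_comm b a, ← mul_assoc, ← rpow_add_one ha.ne', sub_add_cancel]

noncomputable def brezisNirenbergRemainder (p x y : ℝ) : ℝ :=
  |x + y| ^ p - |x| ^ p - |y| ^ p - p * x * y * (|x| ^ (p - 2) + |y| ^ (p - 2))

lemma brezisNirenbergRemainder_comm (p x y : ℝ) :
    brezisNirenbergRemainder p x y = brezisNirenbergRemainder p y x := by
  unfold brezisNirenbergRemainder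
  rw [add_comm x y]
  ring

lemma abs_brezisNirenbergRemainder_le {p x y : ℝ} (hp : 2 < p) (hp3 : p ≤ 3)
    (hxy : |x| ≤ |y|) :
    |brezisNirenbergRemainder p x y|
      ≤ (p * (p - 1) * 2 ^ (p - 2) + 1 + p) * |x| ^ (p - 1) * |y| := by
  have hx := abs_nonneg x
  have hpow_succ : |x| ^ (p - 2) * |x| = |x| ^ (p - 1) := by
    rw [← rpow_add_one' hx (by linarith)]; ring_nf
  have htaylor : |(|y + x| ^ p - |y| ^ p - p * |y| ^ (p - 2) * y * x)|
      ≤ p * (p - 1) * 2 ^ (p - 2) * (|x| ^ (p - 1) * |y|) := by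
    have hc : 0 ≤ p * (p - 1) := by nlinarith
    calc _ ≤ p * (p - 1) * (|x| + |y|) ^ (p - 2) * x ^ 2 := abs_add_rpow_taylor_le hp x y
      _ ≤ p * (p - 1) * (2 * |y|) ^ (p - 2) * x ^ 2 := by
        gcongr p * (p - 1) * ?_ * _
        exact rpow_le_rpow (by positivity) (by linarith) (by linarith)
      _ = p * (p - 1) * 2 ^ (p - 2) * ((|y| ^ (p - 2) * |x|) * |x|) := by
        rw [mul_rpow zero_le_two (abs_nonneg y), ← sq_abs x]; ring
      _ ≤ p * (p - 1) * 2 ^ (p - 2) * ((|x| ^ (p - 2) * |y|) * |x|) := by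
        gcongr _ * (?_ * _)
        exact rpow_mul_le_rpow_mul_of_le hx hxy (by linarith)
      _ = _ := by rw [← hpow_succ]; ring
  have hpow : |x| ^ p ≤ |x| ^ (p - 1) * |y| := by
    calc |x| ^ p = |x| ^ (p - 1) * |x| := by rw [← rpow_add_one' hx (by linarith), sub_add_cancel]
      _ ≤ _ := by gcongr
  have hcross : |p * x * y * |x| ^ (p - 2)| = p * (|x| ^ (p - 1) * |y|) := by
    rw [← hpow_succ, abs_mul, abs_mul, abs_mul, abs_of_pos (by linarith : 0 < p),
      abs_of_nonneg (rpow_nonneg hx _)]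
    ring
  have hsplit : brezisNirenbergRemainder p x y
      = (|y + x| ^ p - |y| ^ p - p * |y| ^ (p - 2) * y * x) - |x| ^ p
        - p * x * y * |x| ^ (p - 2) := by
    unfold brezisNirenbergRemainder; rw [add_comm x y]; ring
  rw [hsplit]
  calc _ ≤ |(|y + x| ^ p - |y| ^ p - p * |y| ^ (p - 2) * y * x)| + |x| ^ p
        + |p * x * y * |x| ^ (p - 2)| := by
        have := abs_sub (|y + x| ^ p - |y| ^ p - p * |y| ^ (p - 2) * y * x - |x| ^ p)
          (p * x * y * |x| ^ (p - 2))
        have := abs_sub (|y + x| ^ p - |y| ^ p - p * |y| ^ (p - 2) * y * x) (|x| ^ p)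
        rw [abs_of_nonneg (rpow_nonneg hx p)] at this
        linarith
    _ ≤ _ := by rw [hcross]; linarith

theorem stmt_1 (p : ℝ) (hp1 : 2 < p) (hp2 : p ≤ 3) :
    ∃ C : ℝ, 0 < C ∧ ∀ x y : ℝ,
      (|x| ≤ |y| →
        |(|x + y| ^ p - |x| ^ p - |y| ^ p - p * x * y * (|x| ^ (p - 2) + |y| ^ (p - 2)))|
          ≤ C * |x| ^ (p - 1) * |y|) ∧
      (|y| ≤ |x| →
        |(|x + y| ^ p - |x| ^ p - |y| ^ p - p * x * y * (|x| ^ (p - 2) + |y| ^ (p - 2)))|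
          ≤ C * |x| * |y| ^ (p - 1)) := by
  have hC : 0 < p * (p - 1) * 2 ^ (p - 2) + 1 + p := by
    have : 0 ≤ p * (p - 1) := by nlinarith
    positivity
  refine ⟨_, hC, fun x y => ⟨abs_brezisNirenbergRemainder_le hp1 hp2, fun hyx => ?_⟩⟩
  have h := abs_brezisNirenbergRemainder_le hp1 hp2 hyx
  rw [← brezisNirenbergRemainder_comm] at h
  exact h.trans_eq (by ring)
end
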